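/- In a thick spider with empty head and body and feet each of size n ≥ 2, every edge lies in exactly one induced P4, and the total number of induced P4s is C(n,2); moreover, no two of these P4s share an edge. -/
import Mathlib


open SimpleGraph

/-- The four (distinct) vertices `a, b, c, d` induce a path `a - b - c - d` in `G`. -/
def IsInducedP4 {V : Type*} (G : SimpleGraph V) (a b c d : V) : Prop :=
  a ≠ b ∧ a ≠ c ∧ a ≠ d ∧ b ≠ c ∧ b ≠ d ∧ c ≠ d ∧
  G.Adj a b ∧ G.Adj b c ∧ G.Adj c d ∧ ¬ G.Adj a c ∧ ¬ G.Adj a d ∧ ¬ G.Adj b d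

/-- A (four-element) vertex set `W` induces a `P₄` in `G`. -/
def InducesP4 {V : Type*} [DecidableEq V] (G : SimpleGraph V) (W : Finset V) : Prop :=
  ∃ a b c d : V, W = {a, b, c, d} ∧ IsInducedP4 G a b c d

/-- The thick spider with empty head: body `K = {inl i}` is a clique, feet `S = {inr i}` form a
stable set, and `inl i` is adjacent to `inr j` iff `i ≠ j`. -/
def thickSpider (n : ℕ) : SimpleGraph (Fin n ⊕ Fin n) :=
  SimpleGraph.fromRel (fun a b =>
    match a, b with
    | Sum.inl i, Sum.inl j => i ≠ j
    | Sum.inl i, Sum.inr j => i ≠ j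
    | Sum.inr _, _ => False)

open Sum

lemma thickSpider_adj_ll {n} {i j : Fin n} :
    (thickSpider n).Adj (inl i) (inl j) ↔ i ≠ j := by
  simp [thickSpider, SimpleGraph.fromRel_adj]; tauto

lemma thickSpider_adj_lr {n} {i j : Fin n} :
    (thickSpider n).Adj (inl i) (inr j) ↔ i ≠ j := by
  simp [thickSpider, SimpleGraph.fromRel_adj]

lemma thickSpider_adj_rl {n} {i j : Fin n} :
    (thickSpider n).Adj (inr i) (inl j) ↔ i ≠ j := by
  simp [thickSpider, SimpleGraph.fromRel_adj, ne_comm]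

lemma thickSpider_adj_rr {n} {i j : Fin n} : ¬ (thickSpider n).Adj (inr i) (inr j) := by
  simp [thickSpider, SimpleGraph.fromRel_adj]

/-- Characterization: the induced `P₄`s of the thick spider are exactly the sets
`{inl i, inl j, inr i, inr j}` with `i ≠ j`. -/
lemma thickSpider_char_P4 {n : ℕ} {W : Finset (Fin n ⊕ Fin n)} :
    InducesP4 (thickSpider n) W ↔
      ∃ i j : Fin n, i ≠ j ∧ W = {inl i, inl j, inr i, inr j} := by
  constructor
  · rintro ⟨a, b, c, d, rfl, h1, h2, h3, h4, h5, h6, hab, hbc, hcd, hac, had, hbd⟩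
    rcases a with i | i <;> rcases b with j | j <;> rcases c with k | k <;> rcases d with l | l <;>
      simp only [thickSpider_adj_ll, thickSpider_adj_lr, thickSpider_adj_rl, thickSpider_adj_rr,
        ne_eq, Sum.inl.injEq, Sum.inr.injEq, not_not, not_false_eq_true,
        not_true_eq_false] at hab hbc hcd hac had hbd h1 h2 h3 h4 h5 h6 <;>
      try tauto
    · obtain rfl := hac
      obtain rfl := hbd
      exact ⟨i, j, fun h => hbc h.symm, by ext x; simp; tauto⟩
  · rintro ⟨i, j, hij, rfl⟩
    refine ⟨inr i, inl j, inl i, inr j, by ext x; simp; tauto, ?_⟩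
    refine ⟨by simp, by simp, by simp [hij], by simp [hij.symm], by simp, by simp, ?_⟩
    simp [thickSpider_adj_ll, thickSpider_adj_lr, thickSpider_adj_rl, thickSpider_adj_rr,
      hij, hij.symm]

lemma thickSpider_pair_eq {n} {i j k l : Fin n} (hij : i ≠ j)
    (hi : i = k ∨ i = l) (hj : j = k ∨ j = l) :
    ({inl k, inl l, inr k, inr l} : Finset (Fin n ⊕ Fin n)) = {inl i, inl j, inr i, inr j} := by
  rcases hi with rfl | rfl <;> rcases hj with rfl | rfl
  · exact absurd rfl hij
  · rfl
  · ext x; simp; tauto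
  · exact absurd rfl hij

/-- The canonical `P₄` vertex set attached to an unordered pair of indices. -/
noncomputable def thickSpiderP4 (n : ℕ) : Sym2 (Fin n) → Finset (Fin n ⊕ Fin n) :=
  Sym2.lift ⟨fun i j => {inl i, inl j, inr i, inr j}, fun i j => by ext x; simp; tauto⟩

/-- In the thick spider with empty head and body and feet each of size `n ≥ 2`,
every edge lies in exactly one induced `P₄`, the total number of induced `P₄`s is `C(n,2)`,
and no two distinct induced `P₄`s share an edge. -/
theorem thickSpider_P4_structure (n : ℕ) (hn : 2 ≤ n) :
    (∀ u v : Fin n ⊕ Fin n, (thickSpider n).Adj u v →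
      ∃! W : Finset (Fin n ⊕ Fin n), InducesP4 (thickSpider n) W ∧ u ∈ W ∧ v ∈ W) ∧
    {W : Finset (Fin n ⊕ Fin n) | InducesP4 (thickSpider n) W}.ncard = n.choose 2 ∧
    (∀ W₁ W₂ : Finset (Fin n ⊕ Fin n), InducesP4 (thickSpider n) W₁ →
      InducesP4 (thickSpider n) W₂ → W₁ ≠ W₂ →
      ∀ u v : Fin n ⊕ Fin n, (thickSpider n).Adj u v →
        ¬ (u ∈ W₁ ∧ v ∈ W₁ ∧ u ∈ W₂ ∧ v ∈ W₂)) := by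
  have part1 : ∀ u v : Fin n ⊕ Fin n, (thickSpider n).Adj u v →
      ∃! W : Finset (Fin n ⊕ Fin n), InducesP4 (thickSpider n) W ∧ u ∈ W ∧ v ∈ W := by
    intro u v huv
    rcases u with i | i <;> rcases v with j | j
    · rw [thickSpider_adj_ll] at huv
      refine ⟨{inl i, inl j, inr i, inr j},
        ⟨thickSpider_char_P4.mpr ⟨i, j, huv, rfl⟩, by simp, by simp⟩, ?_⟩
      rintro W' ⟨hP4, hu, hv⟩
      obtain ⟨k, l, hkl, rfl⟩ := thickSpider_char_P4.mp hP4
      simp at hu hv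
      exact thickSpider_pair_eq huv hu hv
    · rw [thickSpider_adj_lr] at huv
      refine ⟨{inl i, inl j, inr i, inr j},
        ⟨thickSpider_char_P4.mpr ⟨i, j, huv, rfl⟩, by simp, by simp⟩, ?_⟩
      rintro W' ⟨hP4, hu, hv⟩
      obtain ⟨k, l, hkl, rfl⟩ := thickSpider_char_P4.mp hP4
      simp at hu hv
      exact thickSpider_pair_eq huv hu hv
    · rw [thickSpider_adj_rl] at huv
      refine ⟨{inl i, inl j, inr i, inr j},
        ⟨thickSpider_char_P4.mpr ⟨i, j, huv, rfl⟩, by simp, by simp⟩, ?_⟩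
      rintro W' ⟨hP4, hu, hv⟩
      obtain ⟨k, l, hkl, rfl⟩ := thickSpider_char_P4.mp hP4
      simp at hu hv
      exact thickSpider_pair_eq huv hu hv
    · exact absurd huv thickSpider_adj_rr
  refine ⟨part1, ?_, ?_⟩
  · have hset : {W : Finset (Fin n ⊕ Fin n) | InducesP4 (thickSpider n) W} =
        thickSpiderP4 n '' {z : Sym2 (Fin n) | ¬ z.IsDiag} := by
      ext W
      simp only [Set.mem_setOf_eq, Set.mem_image, thickSpider_char_P4]
      constructor
      · rintro ⟨i, j, hij, rfl⟩
        exact ⟨s(i, j), by simp [Sym2.mk_isDiag_iff, hij], by simp [thickSpiderP4]⟩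
      · rintro ⟨z, hz, rfl⟩
        induction z using Sym2.ind with
        | _ i j =>
          rw [Sym2.mk_isDiag_iff] at hz
          exact ⟨i, j, hz, by simp [thickSpiderP4]⟩
    rw [hset, Set.ncard_image_of_injOn ?_]
    · rw [Set.ncard_eq_toFinset_card', Set.toFinset_setOf, ← Fintype.card_subtype,
        Sym2.card_subtype_not_diag, Fintype.card_fin]
    · intro z1 h1 z2 h2 heq
      induction z1 using Sym2.ind with
      | _ i j =>
        induction z2 using Sym2.ind with
        | _ k l =>
          rw [Set.mem_setOf_eq, Sym2.mk_isDiag_iff] at h1 h2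
          simp only [thickSpiderP4, Sym2.lift_mk] at heq
          have hi : (inl i : Fin n ⊕ Fin n) ∈ ({inl k, inl l, inr k, inr l} : Finset _) := by
            rw [← heq]; simp
          have hj : (inl j : Fin n ⊕ Fin n) ∈ ({inl k, inl l, inr k, inr l} : Finset _) := by
            rw [← heq]; simp
          simp at hi hj
          rw [Sym2.eq_iff]
          rcases hi with rfl | rfl <;> rcases hj with rfl | rfl <;> tauto
  · intro W₁ W₂ hW₁ hW₂ hne u v huv ⟨hu1, hv1, hu2, hv2⟩
    exact hne ((part1 u v huv).unique ⟨hW₁, hu1, hv1⟩ ⟨hW₂, hu2, hv2⟩)
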